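/- Let A₁ ∈ ℂ^{m×n}, b₁ ∈ ℂ^m, A₂ ∈ ℂ^{k×n} with rank(A₂) = k ≥ 1, b₂ ∈ ℂ^k, and set ξ := A₁†b₁ + (I − (A₁(I − A₂†A₂))†A₁)(A₂†b₂ − A₁†b₁). Then ξ minimizes ‖A₁x − b₁‖² over all x ∈ ℂ^n satisfying A₂x = b₂, and for every other minimizer x of this constrained problem one has ‖ξ‖ ≤ ‖x‖; that is, ξ is the constrained least squares solution of smallest Euclidean norm. -/

import Mathlib

open Matrix

/-- The four Penrose conditions characterizing the Moore-Penrose inverse. -/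
def IsMoorePenrose {m n : ℕ} (A : Matrix (Fin m) (Fin n) ℂ)
    (X : Matrix (Fin n) (Fin m) ℂ) : Prop :=
  A * X * A = A ∧ X * A * X = X ∧ (A * X)ᴴ = A * X ∧ (X * A)ᴴ = X * A

/-- The range (column space) of a matrix, as a subspace of Euclidean space. -/
noncomputable def mrange {m n : ℕ} (A : Matrix (Fin m) (Fin n) ℂ) :
    Submodule ℂ (EuclideanSpace ℂ (Fin m)) :=
  LinearMap.range (Matrix.toEuclideanLin A)

/-- The null space of a matrix, as a subspace of Euclidean space. -/
noncomputable def mker {m n : ℕ} (A : Matrix (Fin m) (Fin n) ℂ) :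
    Submodule ℂ (EuclideanSpace ℂ (Fin n)) :=
  LinearMap.ker (Matrix.toEuclideanLin A)

/-!
Since `A₂` has full row rank, `x₀ := A₂†b₂` is feasible and the feasible set is `x₀ + ker A₂`.
On `ker A₂` the projector `1 - A₂†A₂` acts as the identity, so with `B := A₁(1 - A₂†A₂)` and
`c := b₁ - A₁x₀` the residual of a feasible `x` is `B(x - x₀) - c`, while `ξ = x₀ + B†c` because
`B†A₁A₁† = B†`. The normal equations `Bᴴ(BB†c - c) = 0` then give
`‖A₁x - b₁‖² = ‖B(x - ξ)‖² + ‖A₁ξ - b₁‖²`, so `ξ` is a minimizer and any other minimizer is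
`ξ + v` with `A₂v = 0 = Bv`. Such a `v` is orthogonal to `x₀ ∈ range A₂†` and to `B†c ∈ range B†`,
hence `‖ξ‖ ≤ ‖ξ + v‖`.
-/

open scoped InnerProductSpace

theorem norm_le_norm_of_inner_sub_eq_zero {𝕜 E : Type*} [RCLike 𝕜] [NormedAddCommGroup E]
    [InnerProductSpace 𝕜 E] {a b : E} (h : ⟪a, b - a⟫_𝕜 = 0) : ‖a‖ ≤ ‖b‖ := by
  have hb : ‖b‖ * ‖b‖ = ‖a‖ * ‖a‖ + ‖b - a‖ * ‖b - a‖ := by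
    simpa using norm_add_sq_eq_norm_sq_add_norm_sq_of_inner_eq_zero a (b - a) h
  nlinarith [norm_nonneg a, norm_nonneg b, mul_self_nonneg ‖b - a‖]

theorem Matrix.toEuclideanLin_mul_apply {p q r : ℕ} (M : Matrix (Fin p) (Fin q) ℂ)
    (N : Matrix (Fin q) (Fin r) ℂ) (v : EuclideanSpace ℂ (Fin r)) :
    toEuclideanLin (M * N) v = toEuclideanLin M (toEuclideanLin N v) := by
  simp

theorem Matrix.toEuclideanLin_one_sub_mul_apply {p q : ℕ} (M : Matrix (Fin p) (Fin q) ℂ)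
    (N : Matrix (Fin q) (Fin p) ℂ) (v : EuclideanSpace ℂ (Fin p)) :
    toEuclideanLin (1 - M * N) v = v - toEuclideanLin M (toEuclideanLin N v) := by
  simp

namespace IsMoorePenrose

variable {m n : ℕ} {A : Matrix (Fin m) (Fin n) ℂ} {X : Matrix (Fin n) (Fin m) ℂ}

theorem conjTranspose_mul_self_mul (h : IsMoorePenrose A X) : Aᴴ * A * X = Aᴴ := by
  obtain ⟨h₁, -, h₃, -⟩ := h
  calc Aᴴ * A * X = Aᴴ * (A * X)ᴴ := by rw [h₃, Matrix.mul_assoc]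
    _ = Aᴴ := by rw [← conjTranspose_mul, h₁]

theorem eq_conjTranspose_mul (h : IsMoorePenrose A X) : X = Aᴴ * (Xᴴ * X) := by
  obtain ⟨-, h₂, -, h₄⟩ := h
  calc X = X * A * X := h₂.symm
    _ = (X * A)ᴴ * X := by rw [h₄]
    _ = Aᴴ * (Xᴴ * X) := by rw [conjTranspose_mul, Matrix.mul_assoc]

theorem eq_mul_conjTranspose (h : IsMoorePenrose A X) : X = X * Xᴴ * Aᴴ := by
  obtain ⟨-, h₂, h₃, -⟩ := h
  calc X = X * (A * X) := by rw [← Matrix.mul_assoc, h₂]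
    _ = X * (A * X)ᴴ := by rw [h₃]
    _ = X * Xᴴ * Aᴴ := by rw [conjTranspose_mul, Matrix.mul_assoc]

theorem mul_eq_one_of_rank_eq (h : IsMoorePenrose A X) (hA : A.rank = m) : A * X = 1 := by
  have hsurj : Function.Surjective (toLin' A) := by
    rw [← LinearMap.range_eq_top]
    exact Submodule.eq_top_of_finrank_eq (by rw [Module.finrank_fin_fun]; exact hA)
  apply Matrix.toLin'.injective
  rw [← (LinearMap.cancel_right hsurj)]
  simpa [Matrix.toLin'_mul] using congrArg Matrix.toLin' h.1

theorem conjTranspose_one_sub_mul_self (h : IsMoorePenrose A X) : (1 - X * A)ᴴ = 1 - X * A := by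
  rw [conjTranspose_sub, conjTranspose_one, h.2.2.2]

theorem mul_one_sub_mul_self (h : IsMoorePenrose A X) : A * (1 - X * A) = 0 := by
  rw [Matrix.mul_sub, Matrix.mul_one, ← Matrix.mul_assoc, h.1, sub_self]

theorem mul_eq_zero_of_mul_conjTranspose_eq_zero {k : ℕ} {N : Matrix (Fin k) (Fin n) ℂ}
    (h : IsMoorePenrose A X) (hN : N * Aᴴ = 0) : N * X = 0 := by
  rw [h.eq_conjTranspose_mul, ← Matrix.mul_assoc, hN, Matrix.zero_mul]

theorem mul_mul_eq_self {k : ℕ} {Q : Matrix (Fin n) (Fin k) ℂ} {G : Matrix (Fin k) (Fin m) ℂ}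
    (hG : IsMoorePenrose (A * Q) G) (hX : IsMoorePenrose A X) : G * A * X = G := by
  calc G * A * X = G * Gᴴ * Qᴴ * (Aᴴ * A * X) := by
        conv_lhs => rw [hG.eq_mul_conjTranspose, conjTranspose_mul]
        simp only [Matrix.mul_assoc]
    _ = G := by
        rw [hX.conjTranspose_mul_self_mul, Matrix.mul_assoc (G * Gᴴ), ← conjTranspose_mul,
          ← hG.eq_mul_conjTranspose]

theorem inner_apply_eq_zero (h : IsMoorePenrose A X) (y : EuclideanSpace ℂ (Fin m))
    {v : EuclideanSpace ℂ (Fin n)} (hv : toEuclideanLin A v = 0) :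
    ⟪toEuclideanLin X y, v⟫_ℂ = 0 := by
  nth_rewrite 1 [← h.2.1]
  rw [toEuclideanLin_mul_apply, ← h.2.2.2,
    toEuclideanLin_conjTranspose_eq_adjoint, LinearMap.adjoint_inner_left,
    toEuclideanLin_mul_apply, hv, map_zero, inner_zero_right]

theorem norm_apply_sub_sq (h : IsMoorePenrose A X) (u : EuclideanSpace ℂ (Fin n))
    (c : EuclideanSpace ℂ (Fin m)) :
    ‖toEuclideanLin A u - c‖ ^ 2 = ‖toEuclideanLin A (u - toEuclideanLin X c)‖ ^ 2 +
      ‖toEuclideanLin A (toEuclideanLin X c) - c‖ ^ 2 := by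
  have hnormal : toEuclideanLin Aᴴ (toEuclideanLin A (toEuclideanLin X c) - c) = 0 := by
    rw [map_sub, ← toEuclideanLin_mul_apply, ← toEuclideanLin_mul_apply,
      h.conjTranspose_mul_self_mul, sub_self]
  have horth : ⟪toEuclideanLin A (u - toEuclideanLin X c),
      toEuclideanLin A (toEuclideanLin X c) - c⟫_ℂ = 0 := by
    rw [← LinearMap.adjoint_inner_right, ← toEuclideanLin_conjTranspose_eq_adjoint, hnormal,
      inner_zero_right]
  rw [sq, sq, sq, ← norm_add_sq_eq_norm_sq_add_norm_sq_of_inner_eq_zero _ _ horth, map_sub,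
    sub_add_sub_cancel]

theorem mul_eq_zero_of_isMoorePenrose_mul_one_sub {p : ℕ} {A₁ : Matrix (Fin p) (Fin n) ℂ}
    {G : Matrix (Fin n) (Fin p) ℂ} (h : IsMoorePenrose A X)
    (hG : IsMoorePenrose (A₁ * (1 - X * A)) G) : A * G = 0 :=
  hG.mul_eq_zero_of_mul_conjTranspose_eq_zero <| by
    rw [conjTranspose_mul, h.conjTranspose_one_sub_mul_self, ← Matrix.mul_assoc,
      h.mul_one_sub_mul_self, Matrix.zero_mul]

theorem apply_add_one_sub_mul_apply {Q : Matrix (Fin n) (Fin n) ℂ} {G : Matrix (Fin n) (Fin m) ℂ}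
    (hG : IsMoorePenrose (A * Q) G) (hX : IsMoorePenrose A X) (b : EuclideanSpace ℂ (Fin m))
    (x₀ : EuclideanSpace ℂ (Fin n)) :
    toEuclideanLin X b + toEuclideanLin (1 - G * A) (x₀ - toEuclideanLin X b) =
      x₀ + toEuclideanLin G (b - toEuclideanLin A x₀) := by
  have hGAX : toEuclideanLin G (toEuclideanLin A (toEuclideanLin X b)) = toEuclideanLin G b := by
    rw [← toEuclideanLin_mul_apply, ← toEuclideanLin_mul_apply, hG.mul_mul_eq_self hX]
  rw [toEuclideanLin_one_sub_mul_apply, map_sub, map_sub, hGAX, map_sub]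
  abel

end IsMoorePenrose

section ConstrainedLeastSquares

variable {m n k : ℕ} {A₁ : Matrix (Fin m) (Fin n) ℂ} {A₂ : Matrix (Fin k) (Fin n) ℂ}
  {Y : Matrix (Fin n) (Fin k) ℂ} {G : Matrix (Fin n) (Fin m) ℂ}

theorem toEuclideanLin_mul_one_sub_mul_apply_of_apply_eq_zero {w : EuclideanSpace ℂ (Fin n)}
    (hw : toEuclideanLin A₂ w = 0) :
    toEuclideanLin (A₁ * (1 - Y * A₂)) w = toEuclideanLin A₁ w := by
  rw [toEuclideanLin_mul_apply, toEuclideanLin_one_sub_mul_apply, hw, map_zero, sub_zero]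

theorem IsMoorePenrose.norm_sq_residual_eq (hG : IsMoorePenrose (A₁ * (1 - Y * A₂)) G)
    (hA₂G : A₂ * G = 0) (b₁ : EuclideanSpace ℂ (Fin m)) {x₀ x ξ : EuclideanSpace ℂ (Fin n)}
    (hx : toEuclideanLin A₂ (x - x₀) = 0)
    (hξ : ξ = x₀ + toEuclideanLin G (b₁ - toEuclideanLin A₁ x₀)) :
    ‖toEuclideanLin A₁ x - b₁‖ ^ 2 =
      ‖toEuclideanLin (A₁ * (1 - Y * A₂)) (x - ξ)‖ ^ 2 + ‖toEuclideanLin A₁ ξ - b₁‖ ^ 2 := by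
  set c := b₁ - toEuclideanLin A₁ x₀
  have hGc : toEuclideanLin A₂ (toEuclideanLin G c) = 0 := by
    rw [← toEuclideanLin_mul_apply, hA₂G, map_zero, LinearMap.zero_apply]
  have hx_res : toEuclideanLin A₁ x - b₁ = toEuclideanLin (A₁ * (1 - Y * A₂)) (x - x₀) - c := by
    rw [toEuclideanLin_mul_one_sub_mul_apply_of_apply_eq_zero hx, map_sub,
      sub_sub_sub_cancel_right]
  have hξ_res : toEuclideanLin A₁ ξ - b₁ =
      toEuclideanLin (A₁ * (1 - Y * A₂)) (toEuclideanLin G c) - c := by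
    rw [toEuclideanLin_mul_one_sub_mul_apply_of_apply_eq_zero hGc, hξ, map_add]
    simp only [c]
    abel
  rw [hx_res, hξ_res, hG.norm_apply_sub_sq, hξ, sub_sub]

end ConstrainedLeastSquares

theorem stmt18_general {m n k : ℕ}
    (A₁ : Matrix (Fin m) (Fin n) ℂ) (b₁ : EuclideanSpace ℂ (Fin m))
    (A₂ : Matrix (Fin k) (Fin n) ℂ) (b₂ : EuclideanSpace ℂ (Fin k))
    (hA₂ : A₂.rank = k)
    (A₁d : Matrix (Fin n) (Fin m) ℂ) (hA₁d : IsMoorePenrose A₁ A₁d)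
    (A₂d : Matrix (Fin n) (Fin k) ℂ) (hA₂d : IsMoorePenrose A₂ A₂d)
    (G : Matrix (Fin n) (Fin m) ℂ) (hG : IsMoorePenrose (A₁ * (1 - A₂d * A₂)) G)
    (ξ : EuclideanSpace ℂ (Fin n))
    (hξ : ξ = Matrix.toEuclideanLin A₁d b₁ +
      Matrix.toEuclideanLin (1 - G * A₁)
        (Matrix.toEuclideanLin A₂d b₂ - Matrix.toEuclideanLin A₁d b₁)) :
    Matrix.toEuclideanLin A₂ ξ = b₂ ∧
      (∀ x : EuclideanSpace ℂ (Fin n), Matrix.toEuclideanLin A₂ x = b₂ →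
        ‖Matrix.toEuclideanLin A₁ ξ - b₁‖ ^ 2 ≤ ‖Matrix.toEuclideanLin A₁ x - b₁‖ ^ 2) ∧
      ∀ x : EuclideanSpace ℂ (Fin n), Matrix.toEuclideanLin A₂ x = b₂ →
        (∀ y : EuclideanSpace ℂ (Fin n), Matrix.toEuclideanLin A₂ y = b₂ →
          ‖Matrix.toEuclideanLin A₁ x - b₁‖ ^ 2 ≤ ‖Matrix.toEuclideanLin A₁ y - b₁‖ ^ 2) →
        ‖ξ‖ ≤ ‖x‖ := by
  set x₀ := toEuclideanLin A₂d b₂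
  have hA₂G : A₂ * G = 0 := hA₂d.mul_eq_zero_of_isMoorePenrose_mul_one_sub hG
  have hx₀ : toEuclideanLin A₂ x₀ = b₂ := by
    rw [← toEuclideanLin_mul_apply, hA₂d.mul_eq_one_of_rank_eq hA₂, toLpLin_one,
      LinearMap.id_apply]
  rw [hG.apply_add_one_sub_mul_apply hA₁d] at hξ
  have hfeas : toEuclideanLin A₂ ξ = b₂ := by
    rw [hξ, map_add, hx₀, ← toEuclideanLin_mul_apply, hA₂G, map_zero, LinearMap.zero_apply,
      add_zero]
  have hdecomp : ∀ x, toEuclideanLin A₂ x = b₂ →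
      ‖toEuclideanLin A₁ x - b₁‖ ^ 2 = ‖toEuclideanLin (A₁ * (1 - A₂d * A₂)) (x - ξ)‖ ^ 2 +
        ‖toEuclideanLin A₁ ξ - b₁‖ ^ 2 := fun x hx =>
    hG.norm_sq_residual_eq hA₂G b₁ (by rw [map_sub, hx, hx₀, sub_self]) hξ
  refine ⟨hfeas, fun x hx => ?_, fun x hx hmin => ?_⟩
  · rw [hdecomp x hx]
    exact le_add_of_nonneg_left (sq_nonneg _)
  · have hBv : toEuclideanLin (A₁ * (1 - A₂d * A₂)) (x - ξ) = 0 := by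
      simpa [hdecomp x hx] using hmin ξ hfeas
    have hA₂v : toEuclideanLin A₂ (x - ξ) = 0 := by rw [map_sub, hx, hfeas, sub_self]
    have horth₀ : ⟪x₀, x - ξ⟫_ℂ = 0 := hA₂d.inner_apply_eq_zero b₂ hA₂v
    have horth₁ := hG.inner_apply_eq_zero (b₁ - toEuclideanLin A₁ x₀) hBv
    refine norm_le_norm_of_inner_sub_eq_zero (𝕜 := ℂ) ?_
    nth_rewrite 1 [hξ]
    rw [inner_add_left, horth₀, horth₁, add_zero]

/-- `ξ := A₁†b₁ + (I − (A₁(I − A₂†A₂))†A₁)(A₂†b₂ − A₁†b₁)` is a minimizer of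
`‖A₁x − b₁‖²` subject to `A₂x = b₂`, and it has the smallest Euclidean norm among all such
minimizers. -/
theorem stmt18 {m n k : ℕ}
    (A₁ : Matrix (Fin m) (Fin n) ℂ) (b₁ : EuclideanSpace ℂ (Fin m))
    (A₂ : Matrix (Fin k) (Fin n) ℂ) (b₂ : EuclideanSpace ℂ (Fin k))
    (hk : 1 ≤ k) (hA₂ : A₂.rank = k)
    (A₁d : Matrix (Fin n) (Fin m) ℂ) (hA₁d : IsMoorePenrose A₁ A₁d)
    (A₂d : Matrix (Fin n) (Fin k) ℂ) (hA₂d : IsMoorePenrose A₂ A₂d)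
    (G : Matrix (Fin n) (Fin m) ℂ) (hG : IsMoorePenrose (A₁ * (1 - A₂d * A₂)) G)
    (ξ : EuclideanSpace ℂ (Fin n))
    (hξ : ξ = Matrix.toEuclideanLin A₁d b₁ +
      Matrix.toEuclideanLin (1 - G * A₁)
        (Matrix.toEuclideanLin A₂d b₂ - Matrix.toEuclideanLin A₁d b₁)) :
    Matrix.toEuclideanLin A₂ ξ = b₂ ∧
      (∀ x : EuclideanSpace ℂ (Fin n), Matrix.toEuclideanLin A₂ x = b₂ →
        ‖Matrix.toEuclideanLin A₁ ξ - b₁‖ ^ 2 ≤ ‖Matrix.toEuclideanLin A₁ x - b₁‖ ^ 2) ∧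
      ∀ x : EuclideanSpace ℂ (Fin n), Matrix.toEuclideanLin A₂ x = b₂ →
        (∀ y : EuclideanSpace ℂ (Fin n), Matrix.toEuclideanLin A₂ y = b₂ →
          ‖Matrix.toEuclideanLin A₁ x - b₁‖ ^ 2 ≤ ‖Matrix.toEuclideanLin A₁ y - b₁‖ ^ 2) →
        ‖ξ‖ ≤ ‖x‖ :=
  stmt18_general A₁ b₁ A₂ b₂ hA₂ A₁d hA₁d A₂d hA₂d G hG ξ hξ
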